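/- Let Z₁, Z₂ ∈ ℝ^{n×n} be symmetric positive semidefinite matrices. Then the matrices I_{rn} + BBᵀ(Z₁ ⊗ I_r) and I_{rn} + BBᵀ(Z₂ ⊗ I_r) are invertible, D(Z₁) and D(Z₂) are symmetric positive semidefinite, and if Z₁ ⪰ Z₂ then D(Z₁) ⪰ D(Z₂) (monotonicity of the Riccati operator on positive semidefinite matrices, Theorem on convergence of fixed point iteration for SDAREs, part 1). -/

import Mathlib

/-!
With `K = X ⊗ I_r`, the map `K ↦ K (1 + B Bᴴ K)⁻¹` is the Loewner minimum over feedbacks `L` of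
the one-step linear-quadratic cost `(1 + B L)ᴴ K (1 + B L) + Lᴴ L`: at a stationary `L₀` the cross
terms cancel, so the cost of `L₀ + M` exceeds that of `L₀` by `Mᴴ (1 + Bᴴ K B) M`, and the gain
`L₀ = -Bᴴ K (1 + B Bᴴ K)⁻¹` is stationary with cost `K (1 + B Bᴴ K)⁻¹`. Each cost is positive
semidefinite and monotone in `K`, hence so is their minimum. Invertibility of `1 + B Bᴴ K` follows
from that of the positive definite `1 + Bᴴ K B` by the Weinstein–Aronszajn identity.
-/

open Matrix
open scoped Kronecker

/-- The SDARE Riccati operator `D(X) = Aᵀ (X ⊗ I_r) (I + B Bᵀ (X ⊗ I_r))⁻¹ A + Cᵀ C`,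
with `rn` realized as the index type `Fin n × Fin r`. -/
noncomputable def Dop {n m l r : ℕ}
    (A : Matrix (Fin n × Fin r) (Fin n) ℝ)
    (B : Matrix (Fin n × Fin r) (Fin m) ℝ)
    (C : Matrix (Fin l) (Fin n) ℝ)
    (X : Matrix (Fin n) (Fin n) ℝ) : Matrix (Fin n) (Fin n) ℝ :=
  Aᵀ * (X ⊗ₖ (1 : Matrix (Fin r) (Fin r) ℝ)) *
      (1 + B * Bᵀ * (X ⊗ₖ (1 : Matrix (Fin r) (Fin r) ℝ)))⁻¹ * A + Cᵀ * C

open scoped ComplexOrder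

namespace Matrix

theorem sub_kronecker {α l m n p : Type*} [Ring α] (A₁ A₂ : Matrix l m α) (B : Matrix n p α) :
    (A₁ - A₂) ⊗ₖ B = A₁ ⊗ₖ B - A₂ ⊗ₖ B := by
  ext
  simp [sub_mul]

variable {𝕜 p q : Type*} [RCLike 𝕜] [Fintype p] [Fintype q] (B : Matrix p q 𝕜) {K : Matrix p p 𝕜}

theorem posDef_one_add_conjTranspose_mul_mul [DecidableEq q] (hK : K.PosSemidef) :
    (1 + Bᴴ * K * B).PosDef :=
  PosDef.one.add_posSemidef (hK.conjTranspose_mul_mul_same B)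

variable [DecidableEq p]

def lqCost (K : Matrix p p 𝕜) (L : Matrix q p 𝕜) : Matrix p p 𝕜 :=
  (1 + B * L)ᴴ * K * (1 + B * L) + Lᴴ * L

theorem lqCost_posSemidef (hK : K.PosSemidef) (L : Matrix q p 𝕜) : (lqCost B K L).PosSemidef :=
  (hK.conjTranspose_mul_mul_same _).add (posSemidef_conjTranspose_mul_self L)

variable {B} {L : Matrix q p 𝕜}

theorem lqCost_sub_lqCost (K₁ K₂ : Matrix p p 𝕜) :
    lqCost B K₁ L - lqCost B K₂ L = (1 + B * L)ᴴ * (K₁ - K₂) * (1 + B * L) := by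
  rw [lqCost, lqCost, add_sub_add_right_eq_sub, Matrix.mul_sub, Matrix.sub_mul]

theorem lqCost_of_stationary (hL : L + Bᴴ * K * (1 + B * L) = 0) :
    lqCost B K L = K * (1 + B * L) := by
  have hKP : Bᴴ * K * (1 + B * L) = -L := eq_neg_of_add_eq_zero_right hL
  calc lqCost B K L = (1 + B * L - B * L)ᴴ * K * (1 + B * L) := by
        rw [lqCost, conjTranspose_sub, Matrix.sub_mul, Matrix.sub_mul, conjTranspose_mul,
          Matrix.mul_assoc Lᴴ, Matrix.mul_assoc Lᴴ, hKP, Matrix.mul_neg, sub_neg_eq_add]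
    _ = K * (1 + B * L) := by rw [add_sub_cancel_right, conjTranspose_one, Matrix.one_mul]

variable [DecidableEq q]

theorem lqCost_add_of_stationary (hK : K.IsHermitian) (hL : L + Bᴴ * K * (1 + B * L) = 0)
    (M : Matrix q p 𝕜) :
    lqCost B K (L + M) = lqCost B K L + Mᴴ * (1 + Bᴴ * K * B) * M := by
  have hsum : 1 + B * (L + M) = 1 + B * L + B * M := by rw [Matrix.mul_add, add_assoc]
  rw [lqCost, lqCost, hsum]
  set P := 1 + B * L
  have hKP : Bᴴ * (K * P) = -L := by
    rw [← Matrix.mul_assoc]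
    exact eq_neg_of_add_eq_zero_right hL
  have hPK : Pᴴ * K * B = -Lᴴ := by
    simpa only [conjTranspose_mul, conjTranspose_neg, conjTranspose_conjTranspose, hK.eq,
      Matrix.mul_assoc] using congrArg conjTranspose hKP
  simp only [conjTranspose_add, conjTranspose_mul, Matrix.add_mul, Matrix.mul_add,
    Matrix.mul_assoc, hKP]
  simp only [← Matrix.mul_assoc, hPK, Matrix.neg_mul, Matrix.mul_neg, Matrix.mul_one]
  abel

theorem isUnit_one_add_mul_conjTranspose_mul (B : Matrix p q 𝕜) (hK : K.PosSemidef) :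
    IsUnit (1 + B * Bᴴ * K) := by
  rw [isUnit_iff_isUnit_det, Matrix.mul_assoc, det_one_add_mul_comm, ← isUnit_iff_isUnit_det]
  exact (posDef_one_add_conjTranspose_mul_mul B hK).isUnit

variable (B K) in
noncomputable def riccatiGain : Matrix q p 𝕜 := -(Bᴴ * K * (1 + B * Bᴴ * K)⁻¹)

theorem one_add_mul_riccatiGain (hK : K.PosSemidef) :
    1 + B * riccatiGain B K = (1 + B * Bᴴ * K)⁻¹ := by
  have hS : (1 + B * Bᴴ * K) * (1 + B * Bᴴ * K)⁻¹ = 1 :=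
    mul_nonsing_inv _ ((isUnit_iff_isUnit_det _).mp (isUnit_one_add_mul_conjTranspose_mul B hK))
  rw [Matrix.add_mul, Matrix.one_mul] at hS
  rw [riccatiGain, Matrix.mul_neg, ← sub_eq_add_neg, ← Matrix.mul_assoc, ← Matrix.mul_assoc]
  exact (eq_sub_of_add_eq hS).symm

theorem riccatiGain_add_eq_zero (hK : K.PosSemidef) :
    riccatiGain B K + Bᴴ * K * (1 + B * riccatiGain B K) = 0 := by
  rw [one_add_mul_riccatiGain hK, riccatiGain, neg_add_cancel]

theorem lqCost_riccatiGain (hK : K.PosSemidef) :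
    lqCost B K (riccatiGain B K) = K * (1 + B * Bᴴ * K)⁻¹ := by
  rw [lqCost_of_stationary (riccatiGain_add_eq_zero hK), one_add_mul_riccatiGain hK]

variable (B)

theorem PosSemidef.mul_inv_one_add_mul_conjTranspose_mul (hK : K.PosSemidef) :
    (K * (1 + B * Bᴴ * K)⁻¹).PosSemidef :=
  lqCost_riccatiGain (B := B) hK ▸ lqCost_posSemidef B hK (riccatiGain B K)

theorem PosSemidef.mul_inv_one_add_mul_conjTranspose_mul_sub {K₁ K₂ : Matrix p p 𝕜}
    (h₁ : K₁.PosSemidef) (h₂ : K₂.PosSemidef) (h₁₂ : (K₁ - K₂).PosSemidef) :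
    (K₁ * (1 + B * Bᴴ * K₁)⁻¹ - K₂ * (1 + B * Bᴴ * K₂)⁻¹).PosSemidef := by
  set L₁ := riccatiGain B K₁
  set L₂ := riccatiGain B K₂
  have hsplit : K₁ * (1 + B * Bᴴ * K₁)⁻¹ - K₂ * (1 + B * Bᴴ * K₂)⁻¹ =
      (lqCost B K₁ L₁ - lqCost B K₂ L₁) + (lqCost B K₂ (L₂ + (L₁ - L₂)) - lqCost B K₂ L₂) := by
    rw [← lqCost_riccatiGain h₁, ← lqCost_riccatiGain h₂, add_sub_cancel]
    abel
  rw [hsplit, lqCost_sub_lqCost, lqCost_add_of_stationary h₂.isHermitian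
    (riccatiGain_add_eq_zero h₂), add_sub_cancel_left]
  exact (h₁₂.conjTranspose_mul_mul_same _).add
    ((posDef_one_add_conjTranspose_mul_mul B h₂).posSemidef.conjTranspose_mul_mul_same _)

end Matrix

section Dop

variable {n m l r : ℕ} (A : Matrix (Fin n × Fin r) (Fin n) ℝ)
  (B : Matrix (Fin n × Fin r) (Fin m) ℝ) (C : Matrix (Fin l) (Fin n) ℝ)

theorem Dop_eq_conjTranspose_mul_mul_add (X : Matrix (Fin n) (Fin n) ℝ) :
    Dop A B C X = Aᴴ * ((X ⊗ₖ (1 : Matrix (Fin r) (Fin r) ℝ)) *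
      (1 + B * Bᴴ * (X ⊗ₖ (1 : Matrix (Fin r) (Fin r) ℝ)))⁻¹) * A + Cᴴ * C := by
  simp only [Dop, conjTranspose_eq_transpose_of_trivial, Matrix.mul_assoc]

theorem posSemidef_Dop {X : Matrix (Fin n) (Fin n) ℝ} (hX : X.PosSemidef) :
    (Dop A B C X).PosSemidef := by
  rw [Dop_eq_conjTranspose_mul_mul_add]
  exact (((hX.kronecker .one).mul_inv_one_add_mul_conjTranspose_mul B).conjTranspose_mul_mul_same
    A).add (posSemidef_conjTranspose_mul_self C)

theorem posSemidef_Dop_sub_Dop {X Y : Matrix (Fin n) (Fin n) ℝ} (hX : X.PosSemidef)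
    (hY : Y.PosSemidef) (hXY : (X - Y).PosSemidef) :
    (Dop A B C X - Dop A B C Y).PosSemidef := by
  rw [Dop_eq_conjTranspose_mul_mul_add, Dop_eq_conjTranspose_mul_mul_add,
    add_sub_add_right_eq_sub, ← Matrix.sub_mul, ← Matrix.mul_sub]
  refine PosSemidef.conjTranspose_mul_mul_same ?_ A
  refine (hX.kronecker .one).mul_inv_one_add_mul_conjTranspose_mul_sub B (hY.kronecker .one) ?_
  simpa only [sub_kronecker] using hXY.kronecker (.one : (1 : Matrix (Fin r) (Fin r) ℝ).PosSemidef)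

end Dop

theorem stmt0 {n m l r : ℕ}
    (A : Matrix (Fin n × Fin r) (Fin n) ℝ)
    (B : Matrix (Fin n × Fin r) (Fin m) ℝ)
    (C : Matrix (Fin l) (Fin n) ℝ)
    (Z₁ Z₂ : Matrix (Fin n) (Fin n) ℝ)
    (hZ₁ : Z₁.PosSemidef) (hZ₂ : Z₂.PosSemidef) :
    IsUnit (1 + B * Bᵀ * (Z₁ ⊗ₖ (1 : Matrix (Fin r) (Fin r) ℝ))) ∧
    IsUnit (1 + B * Bᵀ * (Z₂ ⊗ₖ (1 : Matrix (Fin r) (Fin r) ℝ))) ∧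
    (Dop A B C Z₁).PosSemidef ∧ (Dop A B C Z₂).PosSemidef ∧
    ((Z₁ - Z₂).PosSemidef → (Dop A B C Z₁ - Dop A B C Z₂).PosSemidef) := by
  have hUnit {Z : Matrix (Fin n) (Fin n) ℝ} (hZ : Z.PosSemidef) :
      IsUnit (1 + B * Bᵀ * (Z ⊗ₖ (1 : Matrix (Fin r) (Fin r) ℝ))) := by
    simpa only [conjTranspose_eq_transpose_of_trivial] using
      isUnit_one_add_mul_conjTranspose_mul B (hZ.kronecker .one)
  exact ⟨hUnit hZ₁, hUnit hZ₂, posSemidef_Dop A B C hZ₁, posSemidef_Dop A B C hZ₂,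
    posSemidef_Dop_sub_Dop A B C hZ₁ hZ₂⟩
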